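/- arXiv:math/0104034 — 4 statements merged into one kernel-verified Lean document; each statement's English description precedes it below -/
import Mathlib

section
/- Let p, V, W : ℝ² → ℝ be smooth with p nowhere vanishing, satisfying ∂₂³p − 2W ∂₂p − p ∂₂W = 0, ∂₁W = 0 and ∂₂V = 0, and let ψ : ℝ² → ℂ⁴ be a smooth solution of the canal system ∂₁²ψ = −i p ∂₂ψ + (1/2)(V + i ∂₂p)ψ, ∂₂²ψ = (1/2)W ψ. Assume that at every point the pseudo-Hermitian products of ψ, ∂₁ψ, ∂₂ψ, ∂₁∂₂ψ are: ⟨∂₁ψ, ∂₂ψ⟩ = ⟨∂₂ψ, ∂₁ψ⟩ = 1, ⟨ψ, ∂₁∂₂ψ⟩ = ⟨∂₁∂₂ψ, ψ⟩ = −1, and all other products among these four vectors vanish. Define U = −2·Im(ψ ∧ ∂₁ψ) and S = 2·Re(ψ ∧ ∂₂ψ), ℝ⁶-valued maps. Then, with respect to the real bilinear form Q(x,y) = −x₀y₀ + x₁y₁ + x₂y₂ + x₃y₃ + x₄y₄ − x₅y₅ on ℝ⁶: Q(U,U) = 0, Q(S,S) = 0, each of U, ∂₂U, ∂₂²U is Q-orthogonal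 to each of S, ∂₁S, ∂₁²S, and moreover ∂₂S = 0 identically (so S depends only on R¹). -/
open Complex ComplexConjugate

noncomputable section

/-- Partial derivative in the first variable of a two-variable function. -/
def pd1 {E : Type*} [NormedAddCommGroup E] [NormedSpace ℝ E]
    (f : ℝ → ℝ → E) (x y : ℝ) : E := deriv (fun t => f t y) x

/-- Partial derivative in the second variable of a two-variable function. -/
def pd2 {E : Type*} [NormedAddCommGroup E] [NormedSpace ℝ E]
    (f : ℝ → ℝ → E) (x y : ℝ) : E := deriv (fun t => f x t) y

/-- The pseudo-Hermitian form of signature (2,2) on ℂ⁴: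
`⟨a,b⟩ = −a₀·conj(b₃) + a₁·conj(b₂) + a₂·conj(b₁) − a₃·conj(b₀)`. -/
def herm4 (a b : Fin 4 → ℂ) : ℂ :=
  -(a 0 * conj (b 3)) + a 1 * conj (b 2) + a 2 * conj (b 1) - a 3 * conj (b 0)

/-- The wedge product of two vectors of ℂ⁴, as a vector in ℂ⁶, in the explicit
coordinates `y₀ = (p₀₂ − p₃₁)/2, y₁ = (p₀₂ + p₃₁)/2, y₂ = (p₀₃ + p₁₂)/2,
y₃ = (p₀₃ − p₁₂)/(2i), y₄ = (p₀₁ − p₂₃)/(2i), y₅ = (p₀₁ + p₂₃)/(2i)`,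
where `p_{ij} = aᵢbⱼ − aⱼbᵢ`. -/
def wedgeC (a b : Fin 4 → ℂ) : Fin 6 → ℂ :=
  ![((a 0 * b 2 - a 2 * b 0) - (a 3 * b 1 - a 1 * b 3)) / 2,
    ((a 0 * b 2 - a 2 * b 0) + (a 3 * b 1 - a 1 * b 3)) / 2,
    ((a 0 * b 3 - a 3 * b 0) + (a 1 * b 2 - a 2 * b 1)) / 2,
    ((a 0 * b 3 - a 3 * b 0) - (a 1 * b 2 - a 2 * b 1)) / (2 * Complex.I),
    ((a 0 * b 1 - a 1 * b 0) - (a 2 * b 3 - a 3 * b 2)) / (2 * Complex.I),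
    ((a 0 * b 1 - a 1 * b 0) + (a 2 * b 3 - a 3 * b 2)) / (2 * Complex.I)]

/-- The real bilinear form of signature (4,2) on ℝ⁶ (the Lie quadric form). -/
def Q6 (x y : Fin 6 → ℝ) : ℝ :=
  -(x 0 * y 0) + x 1 * y 1 + x 2 * y 2 + x 3 * y 3 + x 4 * y 4 - x 5 * y 5

/-- The pseudo-Hermitian form of signature (4,2) on ℂ⁶. -/
def herm6 (x y : Fin 6 → ℂ) : ℂ :=
  -(x 0 * conj (y 0)) + x 1 * conj (y 1) + x 2 * conj (y 2) + x 3 * conj (y 3)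
    + x 4 * conj (y 4) - x 5 * conj (y 5)

/-- The complex bilinear form on ℂ⁶. -/
def bil6 (x y : Fin 6 → ℂ) : ℂ :=
  -(x 0 * y 0) + x 1 * y 1 + x 2 * y 2 + x 3 * y 3 + x 4 * y 4 - x 5 * y 5

/-- The Euclidean dot product on ℝ³. -/
def dot3 (u v : Fin 3 → ℝ) : ℝ := u 0 * v 0 + u 1 * v 1 + u 2 * v 2

/-- The Schwarzian derivative `S(h) = h‴/h′ − (3/2)(h″/h′)²`. -/
def schwarzian (h : ℝ → ℝ) (x : ℝ) : ℝ :=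
  deriv (deriv (deriv h)) x / deriv h x - (3/2) * (deriv (deriv h) x / deriv h x) ^ 2

/-- `(∂₁ + c)² u`, an abbreviation for `∂₁(∂₁u + c·u) + c·(∂₁u + c·u)`. -/
def msq1 (c u : ℝ → ℝ → ℂ) : ℝ → ℝ → ℂ := fun x y =>
  pd1 (fun x' y' => pd1 u x' y' + c x' y' * u x' y') x y
    + c x y * (pd1 u x y + c x y * u x y)

/-- `(∂₂ + c)² u`, an abbreviation for `∂₂(∂₂u + c·u) + c·(∂₂u + c·u)`. -/
def msq2 (c u : ℝ → ℝ → ℂ) : ℝ → ℝ → ℂ := fun x y =>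
  pd2 (fun x' y' => pd2 u x' y' + c x' y' * u x' y') x y
    + c x y * (pd2 u x y + c x y * u x y)

/-- The real part map `U = −2·Im(ψ ∧ ∂₁ψ)` used to define the first curvature sphere. -/
def Uvec (ψ : ℝ → ℝ → Fin 4 → ℂ) : ℝ → ℝ → Fin 6 → ℝ :=
  fun x y i => -2 * (wedgeC (ψ x y) (pd1 ψ x y) i).im

/-- The real part map `S = 2·Re(ψ ∧ ∂₂ψ)` used to define the second curvature sphere. -/
def Svec (ψ : ℝ → ℝ → Fin 4 → ℂ) : ℝ → ℝ → Fin 6 → ℝ :=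
  fun x y i => 2 * (wedgeC (ψ x y) (pd2 ψ x y) i).re

/- ## Auxiliary infrastructure -/

section PDInfra

variable {E : Type*} [NormedAddCommGroup E] [NormedSpace ℝ E]

theorem slice1_contDiff {f : ℝ → ℝ → E} (hf : ContDiff ℝ (⊤ : ℕ∞) (fun z : ℝ × ℝ => f z.1 z.2)) (y : ℝ) :
    ContDiff ℝ (⊤ : ℕ∞) (fun t => f t y) :=
  hf.comp (contDiff_id.prodMk contDiff_const)

theorem slice2_contDiff {f : ℝ → ℝ → E} (hf : ContDiff ℝ (⊤ : ℕ∞) (fun z : ℝ × ℝ => f z.1 z.2)) (x : ℝ) :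
    ContDiff ℝ (⊤ : ℕ∞) (fun t => f x t) :=
  hf.comp (contDiff_const.prodMk contDiff_id)

theorem hasDerivAt_pd1 {f : ℝ → ℝ → E} (hf : ContDiff ℝ (⊤ : ℕ∞) (fun z : ℝ × ℝ => f z.1 z.2)) (x y : ℝ) :
    HasDerivAt (fun t => f t y) (pd1 f x y) x :=
  ((slice1_contDiff hf y).differentiable (by simp) x).hasDerivAt

theorem hasDerivAt_pd2 {f : ℝ → ℝ → E} (hf : ContDiff ℝ (⊤ : ℕ∞) (fun z : ℝ × ℝ => f z.1 z.2)) (x y : ℝ) :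
    HasDerivAt (fun t => f x t) (pd2 f x y) y :=
  ((slice2_contDiff hf x).differentiable (by simp) y).hasDerivAt

theorem pd1_eq_fderiv {f : ℝ → ℝ → E} (hf : ContDiff ℝ (⊤ : ℕ∞) (fun z : ℝ × ℝ => f z.1 z.2)) (x y : ℝ) :
    pd1 f x y = fderiv ℝ (fun z : ℝ × ℝ => f z.1 z.2) (x, y) (1, 0) := by
  have h1 : HasDerivAt (fun t : ℝ => (t, y)) ((1 : ℝ), (0 : ℝ)) x :=
    (hasDerivAt_id x).prodMk (hasDerivAt_const x y)
  have h2 := ((hf.differentiable (by simp) (x, y)).hasFDerivAt).comp_hasDerivAt x h1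
  exact h2.deriv

theorem pd2_eq_fderiv {f : ℝ → ℝ → E} (hf : ContDiff ℝ (⊤ : ℕ∞) (fun z : ℝ × ℝ => f z.1 z.2)) (x y : ℝ) :
    pd2 f x y = fderiv ℝ (fun z : ℝ × ℝ => f z.1 z.2) (x, y) (0, 1) := by
  have h1 : HasDerivAt (fun t : ℝ => (x, t)) ((0 : ℝ), (1 : ℝ)) y :=
    (hasDerivAt_const y x).prodMk (hasDerivAt_id y)
  have h2 := ((hf.differentiable (by simp) (x, y)).hasFDerivAt).comp_hasDerivAt y h1
  exact h2.deriv

theorem contDiff_pd1 {f : ℝ → ℝ → E} (hf : ContDiff ℝ (⊤ : ℕ∞) (fun z : ℝ × ℝ => f z.1 z.2)) :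
    ContDiff ℝ (⊤ : ℕ∞) (fun z : ℝ × ℝ => pd1 f z.1 z.2) := by
  have : (fun z : ℝ × ℝ => pd1 f z.1 z.2)
      = fun z : ℝ × ℝ => fderiv ℝ (fun z : ℝ × ℝ => f z.1 z.2) z ((1 : ℝ), (0 : ℝ)) := by
    funext z; exact pd1_eq_fderiv hf z.1 z.2
  rw [this]
  exact (hf.fderiv_right (by simp)).clm_apply contDiff_const

theorem contDiff_pd2 {f : ℝ → ℝ → E} (hf : ContDiff ℝ (⊤ : ℕ∞) (fun z : ℝ × ℝ => f z.1 z.2)) :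
    ContDiff ℝ (⊤ : ℕ∞) (fun z : ℝ × ℝ => pd2 f z.1 z.2) := by
  have : (fun z : ℝ × ℝ => pd2 f z.1 z.2)
      = fun z : ℝ × ℝ => fderiv ℝ (fun z : ℝ × ℝ => f z.1 z.2) z ((0 : ℝ), (1 : ℝ)) := by
    funext z; exact pd2_eq_fderiv hf z.1 z.2
  rw [this]
  exact (hf.fderiv_right (by simp)).clm_apply contDiff_const

theorem pd_comm {f : ℝ → ℝ → E} (hf : ContDiff ℝ (⊤ : ℕ∞) (fun z : ℝ × ℝ => f z.1 z.2)) (x y : ℝ) :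
    pd1 (pd2 f) x y = pd2 (pd1 f) x y := by
  set F := fun z : ℝ × ℝ => f z.1 z.2 with hF
  have hsymm : IsSymmSndFDerivAt ℝ F (x, y) :=
    hf.contDiffAt.isSymmSndFDerivAt (by rw [minSmoothness_of_isRCLikeNormedField]; exact WithTop.coe_le_coe.2 (le_top : (2 : ℕ∞) ≤ ⊤))
  have hd2 : (fun z : ℝ × ℝ => pd2 f z.1 z.2) = fun z => fderiv ℝ F z ((0:ℝ),(1:ℝ)) := by
    funext z; exact pd2_eq_fderiv hf z.1 z.2
  have hd1 : (fun z : ℝ × ℝ => pd1 f z.1 z.2) = fun z => fderiv ℝ F z ((1:ℝ),(0:ℝ)) := by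
    funext z; exact pd1_eq_fderiv hf z.1 z.2
  have hfd : ContDiff ℝ (⊤ : ℕ∞) (fderiv ℝ F) := hf.fderiv_right (by simp)
  have e1 : pd1 (pd2 f) x y = fderiv ℝ (fderiv ℝ F) (x, y) ((1:ℝ),(0:ℝ)) ((0:ℝ),(1:ℝ)) := by
    rw [pd1_eq_fderiv (f := pd2 f) (contDiff_pd2 hf) x y]
    rw [show (fun z : ℝ × ℝ => pd2 f z.1 z.2) = fun z => fderiv ℝ F z ((0:ℝ),(1:ℝ)) from hd2]
    rw [fderiv_clm_apply (hfd.differentiable (by simp) _) (differentiableAt_const _)]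
    simp
  have e2 : pd2 (pd1 f) x y = fderiv ℝ (fderiv ℝ F) (x, y) ((0:ℝ),(1:ℝ)) ((1:ℝ),(0:ℝ)) := by
    rw [pd2_eq_fderiv (f := pd1 f) (contDiff_pd1 hf) x y]
    rw [show (fun z : ℝ × ℝ => pd1 f z.1 z.2) = fun z => fderiv ℝ F z ((1:ℝ),(0:ℝ)) from hd1]
    rw [fderiv_clm_apply (hfd.differentiable (by simp) _) (differentiableAt_const _)]
    simp
  rw [e1, e2, hsymm]

end PDInfra

/- ## Algebra of the wedge product and the forms -/

theorem wedgeC_app0 (a b : Fin 4 → ℂ) :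
    wedgeC a b 0 = ((a 0 * b 2 - a 2 * b 0) - (a 3 * b 1 - a 1 * b 3)) / 2 := rfl
theorem wedgeC_app1 (a b : Fin 4 → ℂ) :
    wedgeC a b 1 = ((a 0 * b 2 - a 2 * b 0) + (a 3 * b 1 - a 1 * b 3)) / 2 := rfl
theorem wedgeC_app2 (a b : Fin 4 → ℂ) :
    wedgeC a b 2 = ((a 0 * b 3 - a 3 * b 0) + (a 1 * b 2 - a 2 * b 1)) / 2 := rfl
theorem wedgeC_app3 (a b : Fin 4 → ℂ) :
    wedgeC a b 3 = ((a 0 * b 3 - a 3 * b 0) - (a 1 * b 2 - a 2 * b 1)) / (2 * Complex.I) := rfl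
theorem wedgeC_app4 (a b : Fin 4 → ℂ) :
    wedgeC a b 4 = ((a 0 * b 1 - a 1 * b 0) - (a 2 * b 3 - a 3 * b 2)) / (2 * Complex.I) := rfl
theorem wedgeC_app5 (a b : Fin 4 → ℂ) :
    wedgeC a b 5 = ((a 0 * b 1 - a 1 * b 0) + (a 2 * b 3 - a 3 * b 2)) / (2 * Complex.I) := rfl

theorem div_twoI (z : ℂ) : z / (2 * Complex.I) = -Complex.I * z / 2 := by
  rw [div_eq_mul_inv, mul_inv, Complex.inv_I]; ring

/-- An explicit polynomial expression for the 4×4 determinant of columns `a b c d`. -/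
def det4 (a b c d : Fin 4 → ℂ) : ℂ :=
  (a 0 * b 1 - a 1 * b 0) * (c 2 * d 3 - c 3 * d 2)
  - (a 0 * b 2 - a 2 * b 0) * (c 1 * d 3 - c 3 * d 1)
  + (a 0 * b 3 - a 3 * b 0) * (c 1 * d 2 - c 2 * d 1)
  + (a 1 * b 2 - a 2 * b 1) * (c 0 * d 3 - c 3 * d 0)
  - (a 1 * b 3 - a 3 * b 1) * (c 0 * d 2 - c 2 * d 0)
  + (a 2 * b 3 - a 3 * b 2) * (c 0 * d 1 - c 1 * d 0)

set_option maxHeartbeats 1000000 in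
theorem bil6_wedge (a b c d : Fin 4 → ℂ) :
    bil6 (wedgeC a b) (wedgeC c d) = det4 a b c d / 2 := by
  simp only [bil6, det4, wedgeC_app0, wedgeC_app1, wedgeC_app2, wedgeC_app3, wedgeC_app4,
    wedgeC_app5, div_twoI]
  ring_nf
  simp only [Complex.I_sq]
  ring

set_option maxHeartbeats 1000000 in
theorem herm6_wedge (a b c d : Fin 4 → ℂ) :
    herm6 (wedgeC a b) (wedgeC c d)
      = -(herm4 a c * herm4 b d - herm4 a d * herm4 b c) / 2 := by
  simp only [herm6, herm4, wedgeC_app0, wedgeC_app1, wedgeC_app2, wedgeC_app3, wedgeC_app4,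
    wedgeC_app5, div_twoI, map_div₀, map_add, map_sub, map_mul, map_neg, map_ofNat,
    Complex.conj_I]
  ring_nf
  simp only [Complex.I_sq]
  ring

theorem bil6_addl (x y z : Fin 6 → ℂ) :
    bil6 (fun i => x i + y i) z = bil6 x z + bil6 y z := by
  simp only [bil6]; ring

theorem bil6_addr (x y z : Fin 6 → ℂ) :
    bil6 x (fun i => y i + z i) = bil6 x y + bil6 x z := by
  simp only [bil6]; ring

theorem bil6_smull (c : ℂ) (x z : Fin 6 → ℂ) :
    bil6 (fun i => c * x i) z = c * bil6 x z := by
  simp only [bil6]; ring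

theorem bil6_smulr (c : ℂ) (x z : Fin 6 → ℂ) :
    bil6 x (fun i => c * z i) = c * bil6 x z := by
  simp only [bil6]; ring

theorem herm6_addl (x y z : Fin 6 → ℂ) :
    herm6 (fun i => x i + y i) z = herm6 x z + herm6 y z := by
  simp only [herm6]; ring

theorem herm6_addr (x y z : Fin 6 → ℂ) :
    herm6 x (fun i => y i + z i) = herm6 x y + herm6 x z := by
  simp only [herm6, map_add]; ring

theorem herm6_smull (c : ℂ) (x z : Fin 6 → ℂ) :
    herm6 (fun i => c * x i) z = c * herm6 x z := by
  simp only [herm6]; ring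

theorem herm6_smulr (c : ℂ) (x z : Fin 6 → ℂ) :
    herm6 x (fun i => c * z i) = (starRingEnd ℂ) c * herm6 x z := by
  simp only [herm6, map_mul]; ring

theorem QII0 (A B : Fin 6 → ℂ) (h : herm6 A B - bil6 A B = 0) :
    Q6 (fun i => -2 * (A i).im) (fun i => -2 * (B i).im) = 0 := by
  have : Q6 (fun i => -2 * (A i).im) (fun i => -2 * (B i).im)
      = 2 * (herm6 A B - bil6 A B).re := by
    simp only [Q6, herm6, bil6, Complex.add_re, Complex.sub_re, Complex.neg_re, Complex.mul_re,
      Complex.mul_im, Complex.conj_re, Complex.conj_im]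
    ring
  rw [this, h]; simp

theorem QRR0 (A B : Fin 6 → ℂ) (h : herm6 A B + bil6 A B = 0) :
    Q6 (fun i => 2 * (A i).re) (fun i => 2 * (B i).re) = 0 := by
  have : Q6 (fun i => 2 * (A i).re) (fun i => 2 * (B i).re)
      = 2 * (herm6 A B + bil6 A B).re := by
    simp only [Q6, herm6, bil6, Complex.add_re, Complex.sub_re, Complex.neg_re, Complex.mul_re,
      Complex.mul_im, Complex.conj_re, Complex.conj_im]
    ring
  rw [this, h]; simp

theorem QIR0 (A B : Fin 6 → ℂ) (h : bil6 A B + herm6 A B = 0) :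
    Q6 (fun i => -2 * (A i).im) (fun i => 2 * (B i).re) = 0 := by
  have : Q6 (fun i => -2 * (A i).im) (fun i => 2 * (B i).re)
      = -2 * (bil6 A B + herm6 A B).im := by
    simp only [Q6, herm6, bil6, Complex.add_im, Complex.sub_im, Complex.neg_im, Complex.mul_re,
      Complex.mul_im, Complex.conj_re, Complex.conj_im]
    ring
  rw [this, h]; simp

theorem hasDerivAt_wedge {a b : ℝ → Fin 4 → ℂ} {a' b' : Fin 4 → ℂ} {t : ℝ}
    (ha : ∀ j, HasDerivAt (fun s => a s j) (a' j) t)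
    (hb : ∀ j, HasDerivAt (fun s => b s j) (b' j) t) (i : Fin 6) :
    HasDerivAt (fun s => wedgeC (a s) (b s) i)
      (wedgeC a' (b t) i + wedgeC (a t) b' i) t := by
  have m02 := (ha 0).mul (hb 2); have m20 := (ha 2).mul (hb 0)
  have m31 := (ha 3).mul (hb 1); have m13 := (ha 1).mul (hb 3)
  have m03 := (ha 0).mul (hb 3); have m30 := (ha 3).mul (hb 0)
  have m12 := (ha 1).mul (hb 2); have m21 := (ha 2).mul (hb 1)
  have m01 := (ha 0).mul (hb 1); have m10 := (ha 1).mul (hb 0)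
  have m23 := (ha 2).mul (hb 3); have m32 := (ha 3).mul (hb 2)
  fin_cases i
  · show HasDerivAt (fun s => ((a s 0 * b s 2 - a s 2 * b s 0) - (a s 3 * b s 1 - a s 1 * b s 3)) / 2) _ t
    convert ((m02.sub m20).sub (m31.sub m13)).div_const 2 using 1
    show wedgeC a' (b t) 0 + wedgeC (a t) b' 0 = _
    simp only [wedgeC, Matrix.cons_val_zero]; ring
    all_goals rfl
  · show HasDerivAt (fun s => ((a s 0 * b s 2 - a s 2 * b s 0) + (a s 3 * b s 1 - a s 1 * b s 3)) / 2) _ t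
    convert ((m02.sub m20).add (m31.sub m13)).div_const 2 using 1
    show (((a' 0 * b t 2 - a' 2 * b t 0) + (a' 3 * b t 1 - a' 1 * b t 3)) / 2) + (((a t 0 * b' 2 - a t 2 * b' 0) + (a t 3 * b' 1 - a t 1 * b' 3)) / 2) = _
    ring
    all_goals rfl
  · show HasDerivAt (fun s => ((a s 0 * b s 3 - a s 3 * b s 0) + (a s 1 * b s 2 - a s 2 * b s 1)) / 2) _ t
    convert ((m03.sub m30).add (m12.sub m21)).div_const 2 using 1
    show (((a' 0 * b t 3 - a' 3 * b t 0) + (a' 1 * b t 2 - a' 2 * b t 1)) / 2) + (((a t 0 * b' 3 - a t 3 * b' 0) + (a t 1 * b' 2 - a t 2 * b' 1)) / 2) = _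
    ring
    all_goals rfl
  · show HasDerivAt (fun s => ((a s 0 * b s 3 - a s 3 * b s 0) - (a s 1 * b s 2 - a s 2 * b s 1)) / (2 * Complex.I)) _ t
    convert ((m03.sub m30).sub (m12.sub m21)).div_const (2 * Complex.I) using 1
    show (((a' 0 * b t 3 - a' 3 * b t 0) - (a' 1 * b t 2 - a' 2 * b t 1)) / (2 * Complex.I)) + (((a t 0 * b' 3 - a t 3 * b' 0) - (a t 1 * b' 2 - a t 2 * b' 1)) / (2 * Complex.I)) = _
    ring
    all_goals rfl
  · show HasDerivAt (fun s => ((a s 0 * b s 1 - a s 1 * b s 0) - (a s 2 * b s 3 - a s 3 * b s 2)) / (2 * Complex.I)) _ t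
    convert ((m01.sub m10).sub (m23.sub m32)).div_const (2 * Complex.I) using 1
    show (((a' 0 * b t 1 - a' 1 * b t 0) - (a' 2 * b t 3 - a' 3 * b t 2)) / (2 * Complex.I)) + (((a t 0 * b' 1 - a t 1 * b' 0) - (a t 2 * b' 3 - a t 3 * b' 2)) / (2 * Complex.I)) = _
    ring
    all_goals rfl
  · show HasDerivAt (fun s => ((a s 0 * b s 1 - a s 1 * b s 0) + (a s 2 * b s 3 - a s 3 * b s 2)) / (2 * Complex.I)) _ t
    convert ((m01.sub m10).add (m23.sub m32)).div_const (2 * Complex.I) using 1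
    show (((a' 0 * b t 1 - a' 1 * b t 0) + (a' 2 * b t 3 - a' 3 * b t 2)) / (2 * Complex.I)) + (((a t 0 * b' 1 - a t 1 * b' 0) + (a t 2 * b' 3 - a t 3 * b' 2)) / (2 * Complex.I)) = _
    ring
    all_goals rfl
theorem wedgeC_mull (c : ℂ) (u v : Fin 4 → ℂ) :
    ∀ i : Fin 6, wedgeC (fun j => c * u j) v i = c * wedgeC u v i := by
  intro i; fin_cases i
  · show (((c * u 0) * v 2 - (c * u 2) * v 0) - ((c * u 3) * v 1 - (c * u 1) * v 3)) / 2 = c * (((u 0 * v 2 - u 2 * v 0) - (u 3 * v 1 - u 1 * v 3)) / 2)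
    ring
  · show (((c * u 0) * v 2 - (c * u 2) * v 0) + ((c * u 3) * v 1 - (c * u 1) * v 3)) / 2 = c * (((u 0 * v 2 - u 2 * v 0) + (u 3 * v 1 - u 1 * v 3)) / 2)
    ring
  · show (((c * u 0) * v 3 - (c * u 3) * v 0) + ((c * u 1) * v 2 - (c * u 2) * v 1)) / 2 = c * (((u 0 * v 3 - u 3 * v 0) + (u 1 * v 2 - u 2 * v 1)) / 2)
    ring
  · show (((c * u 0) * v 3 - (c * u 3) * v 0) - ((c * u 1) * v 2 - (c * u 2) * v 1)) / (2 * Complex.I) = c * (((u 0 * v 3 - u 3 * v 0) - (u 1 * v 2 - u 2 * v 1)) / (2 * Complex.I))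
    ring
  · show (((c * u 0) * v 1 - (c * u 1) * v 0) - ((c * u 2) * v 3 - (c * u 3) * v 2)) / (2 * Complex.I) = c * (((u 0 * v 1 - u 1 * v 0) - (u 2 * v 3 - u 3 * v 2)) / (2 * Complex.I))
    ring
  · show (((c * u 0) * v 1 - (c * u 1) * v 0) + ((c * u 2) * v 3 - (c * u 3) * v 2)) / (2 * Complex.I) = c * (((u 0 * v 1 - u 1 * v 0) + (u 2 * v 3 - u 3 * v 2)) / (2 * Complex.I))
    ring

theorem wedgeC_mulr (c : ℂ) (u v : Fin 4 → ℂ) :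
    ∀ i : Fin 6, wedgeC u (fun j => c * v j) i = c * wedgeC u v i := by
  intro i; fin_cases i
  · show ((u 0 * (c * v 2) - u 2 * (c * v 0)) - (u 3 * (c * v 1) - u 1 * (c * v 3))) / 2 = c * (((u 0 * v 2 - u 2 * v 0) - (u 3 * v 1 - u 1 * v 3)) / 2)
    ring
  · show ((u 0 * (c * v 2) - u 2 * (c * v 0)) + (u 3 * (c * v 1) - u 1 * (c * v 3))) / 2 = c * (((u 0 * v 2 - u 2 * v 0) + (u 3 * v 1 - u 1 * v 3)) / 2)
    ring
  · show ((u 0 * (c * v 3) - u 3 * (c * v 0)) + (u 1 * (c * v 2) - u 2 * (c * v 1))) / 2 = c * (((u 0 * v 3 - u 3 * v 0) + (u 1 * v 2 - u 2 * v 1)) / 2)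
    ring
  · show ((u 0 * (c * v 3) - u 3 * (c * v 0)) - (u 1 * (c * v 2) - u 2 * (c * v 1))) / (2 * Complex.I) = c * (((u 0 * v 3 - u 3 * v 0) - (u 1 * v 2 - u 2 * v 1)) / (2 * Complex.I))
    ring
  · show ((u 0 * (c * v 1) - u 1 * (c * v 0)) - (u 2 * (c * v 3) - u 3 * (c * v 2))) / (2 * Complex.I) = c * (((u 0 * v 1 - u 1 * v 0) - (u 2 * v 3 - u 3 * v 2)) / (2 * Complex.I))
    ring
  · show ((u 0 * (c * v 1) - u 1 * (c * v 0)) + (u 2 * (c * v 3) - u 3 * (c * v 2))) / (2 * Complex.I) = c * (((u 0 * v 1 - u 1 * v 0) + (u 2 * v 3 - u 3 * v 2)) / (2 * Complex.I))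
    ring

theorem wedgeC_linl (c d : ℂ) (u w v : Fin 4 → ℂ) :
    ∀ i : Fin 6, wedgeC (fun j => c * u j + d * w j) v i = c * wedgeC u v i + d * wedgeC w v i := by
  intro i; fin_cases i
  · show (((c * u 0 + d * w 0) * v 2 - (c * u 2 + d * w 2) * v 0) - ((c * u 3 + d * w 3) * v 1 - (c * u 1 + d * w 1) * v 3)) / 2 = c * (((u 0 * v 2 - u 2 * v 0) - (u 3 * v 1 - u 1 * v 3)) / 2) + d * (((w 0 * v 2 - w 2 * v 0) - (w 3 * v 1 - w 1 * v 3)) / 2)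
    ring
  · show (((c * u 0 + d * w 0) * v 2 - (c * u 2 + d * w 2) * v 0) + ((c * u 3 + d * w 3) * v 1 - (c * u 1 + d * w 1) * v 3)) / 2 = c * (((u 0 * v 2 - u 2 * v 0) + (u 3 * v 1 - u 1 * v 3)) / 2) + d * (((w 0 * v 2 - w 2 * v 0) + (w 3 * v 1 - w 1 * v 3)) / 2)
    ring
  · show (((c * u 0 + d * w 0) * v 3 - (c * u 3 + d * w 3) * v 0) + ((c * u 1 + d * w 1) * v 2 - (c * u 2 + d * w 2) * v 1)) / 2 = c * (((u 0 * v 3 - u 3 * v 0) + (u 1 * v 2 - u 2 * v 1)) / 2) + d * (((w 0 * v 3 - w 3 * v 0) + (w 1 * v 2 - w 2 * v 1)) / 2)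
    ring
  · show (((c * u 0 + d * w 0) * v 3 - (c * u 3 + d * w 3) * v 0) - ((c * u 1 + d * w 1) * v 2 - (c * u 2 + d * w 2) * v 1)) / (2 * Complex.I) = c * (((u 0 * v 3 - u 3 * v 0) - (u 1 * v 2 - u 2 * v 1)) / (2 * Complex.I)) + d * (((w 0 * v 3 - w 3 * v 0) - (w 1 * v 2 - w 2 * v 1)) / (2 * Complex.I))
    ring
  · show (((c * u 0 + d * w 0) * v 1 - (c * u 1 + d * w 1) * v 0) - ((c * u 2 + d * w 2) * v 3 - (c * u 3 + d * w 3) * v 2)) / (2 * Complex.I) = c * (((u 0 * v 1 - u 1 * v 0) - (u 2 * v 3 - u 3 * v 2)) / (2 * Complex.I)) + d * (((w 0 * v 1 - w 1 * v 0) - (w 2 * v 3 - w 3 * v 2)) / (2 * Complex.I))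
    ring
  · show (((c * u 0 + d * w 0) * v 1 - (c * u 1 + d * w 1) * v 0) + ((c * u 2 + d * w 2) * v 3 - (c * u 3 + d * w 3) * v 2)) / (2 * Complex.I) = c * (((u 0 * v 1 - u 1 * v 0) + (u 2 * v 3 - u 3 * v 2)) / (2 * Complex.I)) + d * (((w 0 * v 1 - w 1 * v 0) + (w 2 * v 3 - w 3 * v 2)) / (2 * Complex.I))
    ring

theorem wedgeC_linr (c d : ℂ) (u v w : Fin 4 → ℂ) :
    ∀ i : Fin 6, wedgeC u (fun j => c * v j + d * w j) i = c * wedgeC u v i + d * wedgeC u w i := by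
  intro i; fin_cases i
  · show ((u 0 * (c * v 2 + d * w 2) - u 2 * (c * v 0 + d * w 0)) - (u 3 * (c * v 1 + d * w 1) - u 1 * (c * v 3 + d * w 3))) / 2 = c * (((u 0 * v 2 - u 2 * v 0) - (u 3 * v 1 - u 1 * v 3)) / 2) + d * (((u 0 * w 2 - u 2 * w 0) - (u 3 * w 1 - u 1 * w 3)) / 2)
    ring
  · show ((u 0 * (c * v 2 + d * w 2) - u 2 * (c * v 0 + d * w 0)) + (u 3 * (c * v 1 + d * w 1) - u 1 * (c * v 3 + d * w 3))) / 2 = c * (((u 0 * v 2 - u 2 * v 0) + (u 3 * v 1 - u 1 * v 3)) / 2) + d * (((u 0 * w 2 - u 2 * w 0) + (u 3 * w 1 - u 1 * w 3)) / 2)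
    ring
  · show ((u 0 * (c * v 3 + d * w 3) - u 3 * (c * v 0 + d * w 0)) + (u 1 * (c * v 2 + d * w 2) - u 2 * (c * v 1 + d * w 1))) / 2 = c * (((u 0 * v 3 - u 3 * v 0) + (u 1 * v 2 - u 2 * v 1)) / 2) + d * (((u 0 * w 3 - u 3 * w 0) + (u 1 * w 2 - u 2 * w 1)) / 2)
    ring
  · show ((u 0 * (c * v 3 + d * w 3) - u 3 * (c * v 0 + d * w 0)) - (u 1 * (c * v 2 + d * w 2) - u 2 * (c * v 1 + d * w 1))) / (2 * Complex.I) = c * (((u 0 * v 3 - u 3 * v 0) - (u 1 * v 2 - u 2 * v 1)) / (2 * Complex.I)) + d * (((u 0 * w 3 - u 3 * w 0) - (u 1 * w 2 - u 2 * w 1)) / (2 * Complex.I))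
    ring
  · show ((u 0 * (c * v 1 + d * w 1) - u 1 * (c * v 0 + d * w 0)) - (u 2 * (c * v 3 + d * w 3) - u 3 * (c * v 2 + d * w 2))) / (2 * Complex.I) = c * (((u 0 * v 1 - u 1 * v 0) - (u 2 * v 3 - u 3 * v 2)) / (2 * Complex.I)) + d * (((u 0 * w 1 - u 1 * w 0) - (u 2 * w 3 - u 3 * w 2)) / (2 * Complex.I))
    ring
  · show ((u 0 * (c * v 1 + d * w 1) - u 1 * (c * v 0 + d * w 0)) + (u 2 * (c * v 3 + d * w 3) - u 3 * (c * v 2 + d * w 2))) / (2 * Complex.I) = c * (((u 0 * v 1 - u 1 * v 0) + (u 2 * v 3 - u 3 * v 2)) / (2 * Complex.I)) + d * (((u 0 * w 1 - u 1 * w 0) + (u 2 * w 3 - u 3 * w 2)) / (2 * Complex.I))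
    ring

theorem wedgeC_self (u : Fin 4 → ℂ) : ∀ i : Fin 6, wedgeC u u i = 0 := by
  intro i; fin_cases i
  · show ((u 0 * u 2 - u 2 * u 0) - (u 3 * u 1 - u 1 * u 3)) / 2 = 0
    ring
  · show ((u 0 * u 2 - u 2 * u 0) + (u 3 * u 1 - u 1 * u 3)) / 2 = 0
    ring
  · show ((u 0 * u 3 - u 3 * u 0) + (u 1 * u 2 - u 2 * u 1)) / 2 = 0
    ring
  · show ((u 0 * u 3 - u 3 * u 0) - (u 1 * u 2 - u 2 * u 1)) / (2 * Complex.I) = 0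
    ring
  · show ((u 0 * u 1 - u 1 * u 0) - (u 2 * u 3 - u 3 * u 2)) / (2 * Complex.I) = 0
    ring
  · show ((u 0 * u 1 - u 1 * u 0) + (u 2 * u 3 - u 3 * u 2)) / (2 * Complex.I) = 0
    ring

theorem Uvec_apply (ψ : ℝ → ℝ → Fin 4 → ℂ) (x y : ℝ) :
    Uvec ψ x y = fun i => -2 * (wedgeC (ψ x y) (pd1 ψ x y) i).im := rfl

theorem Svec_apply (ψ : ℝ → ℝ → Fin 4 → ℂ) (x y : ℝ) :
    Svec ψ x y = fun i => 2 * (wedgeC (ψ x y) (pd2 ψ x y) i).re := rfl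

theorem fin3_mk_two (h : 2 < 3) : (⟨2, h⟩ : Fin 3) = 2 := rfl

set_option maxHeartbeats 4000000 in
/-- the canal-surface case `q = 0` of the twistor construction.
For a smooth solution `ψ` of the canal system with the prescribed Gram matrix,
`U` and `S` are null, the triples `U, ∂₂U, ∂₂²U` and `S, ∂₁S, ∂₁²S` are mutually
orthogonal, and moreover `∂₂S = 0`. -/
theorem statement_1
    (p V W : ℝ → ℝ → ℝ) (ψ : ℝ → ℝ → Fin 4 → ℂ)
    (hp : ContDiff ℝ (⊤ : ℕ∞) (fun z : ℝ × ℝ => p z.1 z.2))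
    (hV : ContDiff ℝ (⊤ : ℕ∞) (fun z : ℝ × ℝ => V z.1 z.2))
    (hW : ContDiff ℝ (⊤ : ℕ∞) (fun z : ℝ × ℝ => W z.1 z.2))
    (hψ : ContDiff ℝ (⊤ : ℕ∞) (fun z : ℝ × ℝ => ψ z.1 z.2))
    (hp0 : ∀ x y, p x y ≠ 0)
    (hcomp1 : ∀ x y,
      pd2 (pd2 (pd2 p)) x y - 2 * W x y * pd2 p x y - p x y * pd2 W x y = 0)
    (hcomp2 : ∀ x y, pd1 W x y = 0)
    (hcomp3 : ∀ x y, pd2 V x y = 0)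
    (hLW1 : ∀ x y, pd1 (pd1 ψ) x y
        = (-(Complex.I * (p x y : ℂ))) • pd2 ψ x y
          + (((V x y : ℂ) + Complex.I * ((pd2 p x y : ℝ) : ℂ)) / 2) • ψ x y)
    (hLW2 : ∀ x y, pd2 (pd2 ψ) x y = ((W x y : ℂ) / 2) • ψ x y)
    (hgram : ∀ x y, ∀ i j : Fin 4,
      herm4 (![ψ x y, pd1 ψ x y, pd2 ψ x y, pd1 (pd2 ψ) x y] i)
            (![ψ x y, pd1 ψ x y, pd2 ψ x y, pd1 (pd2 ψ) x y] j)
        = !![(0:ℂ), 0, 0, -1; 0, 0, 1, 0; 0, 1, 0, 0; -1, 0, 0, 0] i j) :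
    (∀ x y, Q6 (Uvec ψ x y) (Uvec ψ x y) = 0) ∧
    (∀ x y, Q6 (Svec ψ x y) (Svec ψ x y) = 0) ∧
    (∀ x y, ∀ i j : Fin 3,
      Q6 (![Uvec ψ, pd2 (Uvec ψ), pd2 (pd2 (Uvec ψ))] i x y)
         (![Svec ψ, pd1 (Svec ψ), pd1 (pd1 (Svec ψ))] j x y) = 0) ∧
    (∀ x y, pd2 (Svec ψ) x y = 0) := by
  -- smoothness of the derived maps
  have hψ1 : ContDiff ℝ (⊤ : ℕ∞) (fun z : ℝ × ℝ => pd1 ψ z.1 z.2) := contDiff_pd1 hψ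
  have hψ2 : ContDiff ℝ (⊤ : ℕ∞) (fun z : ℝ × ℝ => pd2 ψ z.1 z.2) := contDiff_pd2 hψ
  have hψ12 : ContDiff ℝ (⊤ : ℕ∞) (fun z : ℝ × ℝ => pd1 (pd2 ψ) z.1 z.2) := contDiff_pd1 hψ2
  -- componentwise derivative facts
  have c1ψ : ∀ x y (j : Fin 4), HasDerivAt (fun t => ψ t y j) (pd1 ψ x y j) x :=
    fun x y j => hasDerivAt_pi.1 (hasDerivAt_pd1 hψ x y) j
  have c2ψ : ∀ x y (j : Fin 4), HasDerivAt (fun t => ψ x t j) (pd2 ψ x y j) y :=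
    fun x y j => hasDerivAt_pi.1 (hasDerivAt_pd2 hψ x y) j
  have c1ψ2 : ∀ x y (j : Fin 4), HasDerivAt (fun t => pd2 ψ t y j) (pd1 (pd2 ψ) x y j) x :=
    fun x y j => hasDerivAt_pi.1 (hasDerivAt_pd1 hψ2 x y) j
  have c2ψ1 : ∀ x y (j : Fin 4), HasDerivAt (fun t => pd1 ψ x t j) (pd1 (pd2 ψ) x y j) y := by
    intro x y j
    have h := hasDerivAt_pi.1 (hasDerivAt_pd2 hψ1 x y) j
    rwa [← pd_comm hψ x y] at h
  have c2ψ2 : ∀ x y (j : Fin 4), HasDerivAt (fun t => pd2 ψ x t j)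
      (((W x y : ℂ) / 2) * ψ x y j) y := by
    intro x y j
    have h := hasDerivAt_pi.1 (hasDerivAt_pd2 hψ2 x y) j
    rw [hLW2 x y] at h
    exact h
  have c1ψ1 : ∀ x y (j : Fin 4), HasDerivAt (fun t => pd1 ψ t y j)
      ((-(Complex.I * (p x y : ℂ))) * pd2 ψ x y j
        + (((V x y : ℂ) + Complex.I * ((pd2 p x y : ℝ) : ℂ)) / 2) * ψ x y j) x := by
    intro x y j
    have h := hasDerivAt_pi.1 (hasDerivAt_pd1 hψ1 x y) j
    rw [hLW1 x y] at h
    exact h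
  -- third-order derivative identities
  have hT4 : ∀ x y, pd2 (pd1 (pd2 ψ)) x y = fun j => ((W x y : ℂ) / 2) * pd1 ψ x y j := by
    intro x y
    rw [← pd_comm hψ2 x y]
    rw [show pd2 (pd2 ψ) = fun a b => ((W a b : ℂ) / 2) • ψ a b from
      funext fun a => funext fun b => hLW2 a b]
    have hWc : HasDerivAt (fun t => ((W t y : ℝ) : ℂ)) (((pd1 W x y : ℝ) : ℂ)) x :=
      Complex.ofRealCLM.hasFDerivAt.comp_hasDerivAt x (hasDerivAt_pd1 hW x y)
    have hcomp : ∀ j : Fin 4, HasDerivAt (fun t => ((W t y : ℂ) / 2) * ψ t y j)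
        (((W x y : ℂ) / 2) * pd1 ψ x y j) x := by
      intro j
      have h := (hWc.div_const 2).mul (c1ψ x y j)
      rw [hcomp2 x y] at h
      exact h.congr_deriv (by simp)
    exact (hasDerivAt_pi.2 hcomp).deriv
  have hX4 : ∀ x y, pd1 (pd1 (pd2 ψ)) x y
      = fun j => (((V x y : ℂ) - Complex.I * ((pd2 p x y : ℝ) : ℂ)) / 2) * pd2 ψ x y j
        + (Complex.I * (((pd2 (pd2 p) x y : ℝ) : ℂ) - (p x y : ℂ) * (W x y : ℂ)) / 2) * ψ x y j := by
    intro x y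
    rw [show pd1 (pd2 ψ) = pd2 (pd1 ψ) from funext fun a => funext fun b => pd_comm hψ a b]
    rw [pd_comm hψ1 x y]
    rw [show pd1 (pd1 ψ) = fun a b => (-(Complex.I * (p a b : ℂ))) • pd2 ψ a b
        + (((V a b : ℂ) + Complex.I * ((pd2 p a b : ℝ) : ℂ)) / 2) • ψ a b from
      funext fun a => funext fun b => hLW1 a b]
    have hpc : HasDerivAt (fun t => ((p x t : ℝ) : ℂ)) (((pd2 p x y : ℝ) : ℂ)) y :=
      Complex.ofRealCLM.hasFDerivAt.comp_hasDerivAt y (hasDerivAt_pd2 hp x y)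
    have hp2c : HasDerivAt (fun t => ((pd2 p x t : ℝ) : ℂ)) (((pd2 (pd2 p) x y : ℝ) : ℂ)) y :=
      Complex.ofRealCLM.hasFDerivAt.comp_hasDerivAt y (hasDerivAt_pd2 (contDiff_pd2 hp) x y)
    have hVc : HasDerivAt (fun t => ((V x t : ℝ) : ℂ)) (((pd2 V x y : ℝ) : ℂ)) y :=
      Complex.ofRealCLM.hasFDerivAt.comp_hasDerivAt y (hasDerivAt_pd2 hV x y)
    have hcomp : ∀ j : Fin 4, HasDerivAt
        (fun t => (-(Complex.I * ((p x t : ℝ) : ℂ))) * pd2 ψ x t j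
          + (((V x t : ℂ) + Complex.I * ((pd2 p x t : ℝ) : ℂ)) / 2) * ψ x t j)
        ((((V x y : ℂ) - Complex.I * ((pd2 p x y : ℝ) : ℂ)) / 2) * pd2 ψ x y j
          + (Complex.I * (((pd2 (pd2 p) x y : ℝ) : ℂ) - (p x y : ℂ) * (W x y : ℂ)) / 2) * ψ x y j) y := by
      intro j
      have hA := ((hpc.const_mul Complex.I).neg).mul (c2ψ2 x y j)
      have hB := ((hVc.add (hp2c.const_mul Complex.I)).div_const 2).mul (c2ψ x y j)
      have h := hA.add hB
      rw [hcomp3 x y] at h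
      refine h.congr_deriv ?_
      simp only [Pi.add_apply, Pi.neg_apply]
      push_cast
      ring
    exact (hasDerivAt_pi.2 hcomp).deriv
  have c2ψ12 : ∀ x y (j : Fin 4), HasDerivAt (fun t => pd1 (pd2 ψ) x t j)
      (((W x y : ℂ) / 2) * pd1 ψ x y j) y := by
    intro x y j
    have h := hasDerivAt_pi.1 (hasDerivAt_pd2 hψ12 x y) j
    rw [hT4 x y] at h
    exact h
  have c1ψ12 : ∀ x y (j : Fin 4), HasDerivAt (fun t => pd1 (pd2 ψ) t y j)
      ((((V x y : ℂ) - Complex.I * ((pd2 p x y : ℝ) : ℂ)) / 2) * pd2 ψ x y j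
        + (Complex.I * (((pd2 (pd2 p) x y : ℝ) : ℂ) - (p x y : ℂ) * (W x y : ℂ)) / 2) * ψ x y j) x := by
    intro x y j
    have h := hasDerivAt_pi.1 (hasDerivAt_pd1 hψ12 x y) j
    rw [hX4 x y] at h
    exact h
  -- first derivatives of U and S
  have hU1 : ∀ x y, pd2 (Uvec ψ) x y = fun i => -2 *
      ((wedgeC (pd2 ψ x y) (pd1 ψ x y) i + wedgeC (ψ x y) (pd1 (pd2 ψ) x y) i)).im := by
    intro x y
    have hcomp : ∀ i : Fin 6, HasDerivAt (fun t => -2 * (wedgeC (ψ x t) (pd1 ψ x t) i).im)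
        (-2 * ((wedgeC (pd2 ψ x y) (pd1 ψ x y) i + wedgeC (ψ x y) (pd1 (pd2 ψ) x y) i)).im) y := by
      intro i
      have hw := hasDerivAt_wedge (fun j => c2ψ x y j) (fun j => c2ψ1 x y j) i
      exact (Complex.imCLM.hasFDerivAt.comp_hasDerivAt y hw).const_mul (-2)
    exact (hasDerivAt_pi.2 hcomp).deriv
  have hS1 : ∀ x y, pd1 (Svec ψ) x y = fun i => 2 *
      ((wedgeC (pd1 ψ x y) (pd2 ψ x y) i + wedgeC (ψ x y) (pd1 (pd2 ψ) x y) i)).re := by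
    intro x y
    have hcomp : ∀ i : Fin 6, HasDerivAt (fun t => 2 * (wedgeC (ψ t y) (pd2 ψ t y) i).re)
        (2 * ((wedgeC (pd1 ψ x y) (pd2 ψ x y) i + wedgeC (ψ x y) (pd1 (pd2 ψ) x y) i)).re) x := by
      intro i
      have hw := hasDerivAt_wedge (fun j => c1ψ x y j) (fun j => c1ψ2 x y j) i
      exact (Complex.reCLM.hasFDerivAt.comp_hasDerivAt x hw).const_mul (2)
    exact (hasDerivAt_pi.2 hcomp).deriv
  -- S does not depend on the second variable
  have hD1 : ∀ x y, pd2 (Svec ψ) x y = 0 := by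
    intro x y
    have hcomp : ∀ i : Fin 6, HasDerivAt (fun t => 2 * (wedgeC (ψ x t) (pd2 ψ x t) i).re)
        ((0:ℝ)) y := by
      intro i
      have hw := hasDerivAt_wedge (fun j => c2ψ x y j) (fun j => c2ψ2 x y j) i
      have h := (Complex.reCLM.hasFDerivAt.comp_hasDerivAt y hw).const_mul (2:ℝ)
      simp only [wedgeC_mulr, wedgeC_self, mul_zero, add_zero, zero_add, map_zero] at h
      exact h
    have key : HasDerivAt (fun t => Svec ψ x t) (fun _ => (0:ℝ)) y := hasDerivAt_pi.2 hcomp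
    exact key.deriv
  -- second derivatives of U and S
  have hU2 : ∀ x y, pd2 (pd2 (Uvec ψ)) x y = fun i => -2 *
      ((((W x y : ℂ) / 2) * wedgeC (ψ x y) (pd1 ψ x y) i
          + wedgeC (pd2 ψ x y) (pd1 (pd2 ψ) x y) i)
        + (wedgeC (pd2 ψ x y) (pd1 (pd2 ψ) x y) i
          + ((W x y : ℂ) / 2) * wedgeC (ψ x y) (pd1 ψ x y) i)).im := by
    intro x y
    rw [show pd2 (Uvec ψ) = fun a b i => -2 *
        ((wedgeC (pd2 ψ a b) (pd1 ψ a b) i + wedgeC (ψ a b) (pd1 (pd2 ψ) a b) i)).im from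
      funext fun a => funext fun b => hU1 a b]
    have hcomp : ∀ i : Fin 6, HasDerivAt (fun t => -2 *
        ((wedgeC (pd2 ψ x t) (pd1 ψ x t) i + wedgeC (ψ x t) (pd1 (pd2 ψ) x t) i)).im)
        (-2 * ((((W x y : ℂ) / 2) * wedgeC (ψ x y) (pd1 ψ x y) i
          + wedgeC (pd2 ψ x y) (pd1 (pd2 ψ) x y) i)
          + (wedgeC (pd2 ψ x y) (pd1 (pd2 ψ) x y) i
          + ((W x y : ℂ) / 2) * wedgeC (ψ x y) (pd1 ψ x y) i)).im) y := by
      intro i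
      have hwA := hasDerivAt_wedge (fun j => c2ψ2 x y j) (fun j => c2ψ1 x y j) i
      have hwB := hasDerivAt_wedge (fun j => c2ψ x y j) (fun j => c2ψ12 x y j) i
      have h := (Complex.imCLM.hasFDerivAt.comp_hasDerivAt y (hwA.add hwB)).const_mul (-2:ℝ)
      simp only [wedgeC_mull, wedgeC_mulr] at h
      exact h
    exact (hasDerivAt_pi.2 hcomp).deriv
  have hS2 : ∀ x y, pd1 (pd1 (Svec ψ)) x y = fun i => 2 *
      (((-(Complex.I * (p x y : ℂ))) * wedgeC (pd2 ψ x y) (pd2 ψ x y) i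
          + (((V x y : ℂ) + Complex.I * ((pd2 p x y : ℝ) : ℂ)) / 2) * wedgeC (ψ x y) (pd2 ψ x y) i
          + wedgeC (pd1 ψ x y) (pd1 (pd2 ψ) x y) i)
        + (wedgeC (pd1 ψ x y) (pd1 (pd2 ψ) x y) i
          + ((((V x y : ℂ) - Complex.I * ((pd2 p x y : ℝ) : ℂ)) / 2) * wedgeC (ψ x y) (pd2 ψ x y) i
            + (Complex.I * (((pd2 (pd2 p) x y : ℝ) : ℂ) - (p x y : ℂ) * (W x y : ℂ)) / 2)
              * wedgeC (ψ x y) (ψ x y) i))).re := by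
    intro x y
    rw [show pd1 (Svec ψ) = fun a b i => 2 *
        ((wedgeC (pd1 ψ a b) (pd2 ψ a b) i + wedgeC (ψ a b) (pd1 (pd2 ψ) a b) i)).re from
      funext fun a => funext fun b => hS1 a b]
    have hcomp : ∀ i : Fin 6, HasDerivAt (fun t => 2 *
        ((wedgeC (pd1 ψ t y) (pd2 ψ t y) i + wedgeC (ψ t y) (pd1 (pd2 ψ) t y) i)).re)
        (2 * (((-(Complex.I * (p x y : ℂ))) * wedgeC (pd2 ψ x y) (pd2 ψ x y) i
          + (((V x y : ℂ) + Complex.I * ((pd2 p x y : ℝ) : ℂ)) / 2) * wedgeC (ψ x y) (pd2 ψ x y) i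
          + wedgeC (pd1 ψ x y) (pd1 (pd2 ψ) x y) i)
        + (wedgeC (pd1 ψ x y) (pd1 (pd2 ψ) x y) i
          + ((((V x y : ℂ) - Complex.I * ((pd2 p x y : ℝ) : ℂ)) / 2) * wedgeC (ψ x y) (pd2 ψ x y) i
            + (Complex.I * (((pd2 (pd2 p) x y : ℝ) : ℂ) - (p x y : ℂ) * (W x y : ℂ)) / 2)
              * wedgeC (ψ x y) (ψ x y) i))).re) x := by
      intro i
      have hwA := hasDerivAt_wedge (fun j => c1ψ1 x y j) (fun j => c1ψ2 x y j) i
      have hwB := hasDerivAt_wedge (fun j => c1ψ x y j) (fun j => c1ψ12 x y j) i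
      have h := (Complex.reCLM.hasFDerivAt.comp_hasDerivAt x (hwA.add hwB)).const_mul (2:ℝ)
      simp only [wedgeC_linl, wedgeC_linr] at h
      exact h
    exact (hasDerivAt_pi.2 hcomp).deriv
  -- the Gram matrix entries
  have g00 : ∀ x y, herm4 (ψ x y) (ψ x y) = 0 := fun x y => by simpa using hgram x y 0 0
  have g01 : ∀ x y, herm4 (ψ x y) (pd1 ψ x y) = 0 := fun x y => by simpa using hgram x y 0 1
  have g02 : ∀ x y, herm4 (ψ x y) (pd2 ψ x y) = 0 := fun x y => by simpa using hgram x y 0 2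
  have g03 : ∀ x y, herm4 (ψ x y) (pd1 (pd2 ψ) x y) = -1 := fun x y => by simpa using hgram x y 0 3
  have g10 : ∀ x y, herm4 (pd1 ψ x y) (ψ x y) = 0 := fun x y => by simpa using hgram x y 1 0
  have g11 : ∀ x y, herm4 (pd1 ψ x y) (pd1 ψ x y) = 0 := fun x y => by simpa using hgram x y 1 1
  have g12 : ∀ x y, herm4 (pd1 ψ x y) (pd2 ψ x y) = 1 := fun x y => by simpa using hgram x y 1 2
  have g13 : ∀ x y, herm4 (pd1 ψ x y) (pd1 (pd2 ψ) x y) = 0 := fun x y => by simpa using hgram x y 1 3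
  have g20 : ∀ x y, herm4 (pd2 ψ x y) (ψ x y) = 0 := fun x y => by simpa using hgram x y 2 0
  have g21 : ∀ x y, herm4 (pd2 ψ x y) (pd1 ψ x y) = 1 := fun x y => by simpa using hgram x y 2 1
  have g22 : ∀ x y, herm4 (pd2 ψ x y) (pd2 ψ x y) = 0 := fun x y => by simpa using hgram x y 2 2
  have g23 : ∀ x y, herm4 (pd2 ψ x y) (pd1 (pd2 ψ) x y) = 0 := fun x y => by simpa using hgram x y 2 3
  have g30 : ∀ x y, herm4 (pd1 (pd2 ψ) x y) (ψ x y) = -1 := fun x y => by simpa using hgram x y 3 0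
  have g31 : ∀ x y, herm4 (pd1 (pd2 ψ) x y) (pd1 ψ x y) = 0 := fun x y => by simpa using hgram x y 3 1
  have g32 : ∀ x y, herm4 (pd1 (pd2 ψ) x y) (pd2 ψ x y) = 0 := fun x y => by simpa using hgram x y 3 2
  have g33 : ∀ x y, herm4 (pd1 (pd2 ψ) x y) (pd1 (pd2 ψ) x y) = 0 := fun x y => by simpa using hgram x y 3 3
  refine ⟨?_, ?_, ?_, hD1⟩
  · intro x y
    simp only [Uvec_apply]
    apply QII0
    simp only [bil6_wedge, herm6_wedge, g00, g01, g10, g11]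
    simp only [det4]
    ring
  · intro x y
    simp only [Svec_apply]
    apply QRR0
    simp only [bil6_wedge, herm6_wedge, g00, g02, g20, g22]
    simp only [det4]
    ring
  · intro x y i j
    fin_cases i <;> fin_cases j <;>
      simp only [Fin.zero_eta, Fin.mk_one, fin3_mk_two, Matrix.cons_val_zero, Matrix.cons_val_one,
        Matrix.head_cons, Matrix.cons_val_two, Matrix.tail_cons] <;>
      simp only [hU1, hU2, hS1, hS2, Uvec_apply, Svec_apply] <;>
      apply QIR0 <;>
      simp only [bil6_addl, bil6_addr, bil6_smull, bil6_smulr, herm6_addl, herm6_addr,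
        herm6_smull, herm6_smulr, bil6_wedge, herm6_wedge] <;>
      simp only [g00, g01, g02, g03, g10, g11, g12, g13, g20, g21, g22, g23, g30, g31, g32, g33] <;>
      simp only [det4, map_div₀, map_sub, map_add, map_mul, map_neg, map_one, map_ofNat,
        Complex.conj_ofReal, Complex.conj_I] <;>
      (try push_cast) <;>
      (first | ring | (ring_nf; simp only [Complex.I_sq]; ring))
end
end

section
/- Let p, q, V, W : ℝ² → ℝ be smooth and satisfy the compatibility conditions, and let φ, χ : ℝ² → ℂ be smooth solutions of the scalar Lie–Wilczynski system. Then the function B = −φ·∂₁∂₂(conj χ) + ∂₁φ·∂₂(conj χ) + ∂₂φ·∂₁(conj χ) − (conj χ)·∂₁∂₂φ + p·q·φ·(conj χ) is constant on ℝ², i.e. ∂₁B = 0 and ∂₂B = 0 identically. (This expression defines an invariant pseudo-Hermitian scalar product of signature (2,2) on the 4-dimensional solution space.) -/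
open Complex ComplexConjugate

noncomputable section

variable {E : Type*} [NormedAddCommGroup E] [NormedSpace ℝ E]

theorem LW_aux (p q V W φ ψ : ℝ → ℝ → ℂ)
    (hp : ContDiff ℝ (⊤ : ℕ∞) (fun z : ℝ × ℝ => p z.1 z.2))
    (hq : ContDiff ℝ (⊤ : ℕ∞) (fun z : ℝ × ℝ => q z.1 z.2))
    (hV : ContDiff ℝ (⊤ : ℕ∞) (fun z : ℝ × ℝ => V z.1 z.2))
    (hW : ContDiff ℝ (⊤ : ℕ∞) (fun z : ℝ × ℝ => W z.1 z.2))
    (hφ : ContDiff ℝ (⊤ : ℕ∞) (fun z : ℝ × ℝ => φ z.1 z.2))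
    (hψ : ContDiff ℝ (⊤ : ℕ∞) (fun z : ℝ × ℝ => ψ z.1 z.2))
    (hc2 : ∀ x y, pd1 W x y = 2 * q x y * pd2 p x y + p x y * pd2 q x y)
    (hc3 : ∀ x y, pd2 V x y = 2 * p x y * pd1 q x y + q x y * pd1 p x y)
    (hφ1 : ∀ x y, pd1 (pd1 φ) x y
        = -(Complex.I * p x y) * pd2 φ x y + ((V x y + Complex.I * pd2 p x y) / 2) * φ x y)
    (hφ2 : ∀ x y, pd2 (pd2 φ) x y
        = Complex.I * q x y * pd1 φ x y + ((W x y - Complex.I * pd1 q x y) / 2) * φ x y)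
    (hψ1 : ∀ x y, pd1 (pd1 ψ) x y
        = Complex.I * p x y * pd2 ψ x y + ((V x y - Complex.I * pd2 p x y) / 2) * ψ x y)
    (hψ2 : ∀ x y, pd2 (pd2 ψ) x y
        = -(Complex.I * q x y) * pd1 ψ x y + ((W x y + Complex.I * pd1 q x y) / 2) * ψ x y)
    (x y : ℝ) :
    pd1 (fun u v => -(φ u v * pd1 (pd2 ψ) u v) + pd1 φ u v * pd2 ψ u v
        + pd2 φ u v * pd1 ψ u v - ψ u v * pd1 (pd2 φ) u v
        + p u v * q u v * φ u v * ψ u v) x y = 0 ∧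
    pd2 (fun u v => -(φ u v * pd1 (pd2 ψ) u v) + pd1 φ u v * pd2 ψ u v
        + pd2 φ u v * pd1 ψ u v - ψ u v * pd1 (pd2 φ) u v
        + p u v * q u v * φ u v * ψ u v) x y = 0 := by
  have Fψ : pd1 (pd2 ψ) = pd2 (pd1 ψ) := funext fun u => funext fun v => pd_comm hψ u v
  have Fφ : pd1 (pd2 φ) = pd2 (pd1 φ) := funext fun u => funext fun v => pd_comm hφ u v
  have G1ψ : pd1 (pd1 ψ) = fun u v => Complex.I * p u v * pd2 ψ u v
      + ((V u v - Complex.I * pd2 p u v) / 2) * ψ u v :=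
    funext fun u => funext fun v => hψ1 u v
  have G1φ : pd1 (pd1 φ) = fun u v => -(Complex.I * p u v) * pd2 φ u v
      + ((V u v + Complex.I * pd2 p u v) / 2) * φ u v :=
    funext fun u => funext fun v => hφ1 u v
  have G2ψ : pd2 (pd2 ψ) = fun u v => -(Complex.I * q u v) * pd1 ψ u v
      + ((W u v + Complex.I * pd1 q u v) / 2) * ψ u v :=
    funext fun u => funext fun v => hψ2 u v
  have G2φ : pd2 (pd2 φ) = fun u v => Complex.I * q u v * pd1 φ u v
      + ((W u v - Complex.I * pd1 q u v) / 2) * φ u v :=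
    funext fun u => funext fun v => hφ2 u v
  constructor
  · -- third mixed derivatives in direction 1
    have e3 : pd1 (pd1 (pd2 ψ)) x y
        = (Complex.I * pd2 p x y * pd2 ψ x y + Complex.I * p x y * pd2 (pd2 ψ) x y)
          + (((pd2 V x y - Complex.I * pd2 (pd2 p) x y) / 2) * ψ x y
            + ((V x y - Complex.I * pd2 p x y) / 2) * pd2 ψ x y) := by
      rw [Fψ, pd_comm (contDiff_pd1 hψ) x y, G1ψ]
      exact ((((hasDerivAt_pd2 hp x y).const_mul Complex.I).mul
          (hasDerivAt_pd2 (contDiff_pd2 hψ) x y)).add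
        ((((hasDerivAt_pd2 hV x y).sub
            ((hasDerivAt_pd2 (contDiff_pd2 hp) x y).const_mul Complex.I)).div_const 2).mul
          (hasDerivAt_pd2 hψ x y))).deriv
    have e4 : pd1 (pd1 (pd2 φ)) x y
        = (-(Complex.I * pd2 p x y) * pd2 φ x y + -(Complex.I * p x y) * pd2 (pd2 φ) x y)
          + (((pd2 V x y + Complex.I * pd2 (pd2 p) x y) / 2) * φ x y
            + ((V x y + Complex.I * pd2 p x y) / 2) * pd2 φ x y) := by
      rw [Fφ, pd_comm (contDiff_pd1 hφ) x y, G1φ]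
      exact (((((hasDerivAt_pd2 hp x y).const_mul Complex.I).neg).mul
          (hasDerivAt_pd2 (contDiff_pd2 hφ) x y)).add
        ((((hasDerivAt_pd2 hV x y).add
            ((hasDerivAt_pd2 (contDiff_pd2 hp) x y).const_mul Complex.I)).div_const 2).mul
          (hasDerivAt_pd2 hφ x y))).deriv
    have hD : pd1 (fun u v => -(φ u v * pd1 (pd2 ψ) u v) + pd1 φ u v * pd2 ψ u v
        + pd2 φ u v * pd1 ψ u v - ψ u v * pd1 (pd2 φ) u v
        + p u v * q u v * φ u v * ψ u v) x y
        = -(pd1 φ x y * pd1 (pd2 ψ) x y + φ x y * pd1 (pd1 (pd2 ψ)) x y)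
          + (pd1 (pd1 φ) x y * pd2 ψ x y + pd1 φ x y * pd1 (pd2 ψ) x y)
          + (pd1 (pd2 φ) x y * pd1 ψ x y + pd2 φ x y * pd1 (pd1 ψ) x y)
          - (pd1 ψ x y * pd1 (pd2 φ) x y + ψ x y * pd1 (pd1 (pd2 φ)) x y)
          + (((pd1 p x y * q x y + p x y * pd1 q x y) * φ x y
                + p x y * q x y * pd1 φ x y) * ψ x y
              + p x y * q x y * φ x y * pd1 ψ x y) :=
      ((((((hasDerivAt_pd1 hφ x y).mul
            (hasDerivAt_pd1 (contDiff_pd1 (contDiff_pd2 hψ)) x y)).neg).add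
          ((hasDerivAt_pd1 (contDiff_pd1 hφ) x y).mul
            (hasDerivAt_pd1 (contDiff_pd2 hψ) x y))).add
        ((hasDerivAt_pd1 (contDiff_pd2 hφ) x y).mul
            (hasDerivAt_pd1 (contDiff_pd1 hψ) x y))).sub
        ((hasDerivAt_pd1 hψ x y).mul
            (hasDerivAt_pd1 (contDiff_pd1 (contDiff_pd2 hφ)) x y))).add
        ((((hasDerivAt_pd1 hp x y).mul (hasDerivAt_pd1 hq x y)).mul
            (hasDerivAt_pd1 hφ x y)).mul (hasDerivAt_pd1 hψ x y)) |>.deriv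
    rw [hD, e3, e4, hφ1 x y, hψ1 x y, hφ2 x y, hψ2 x y, hc3 x y]
    linear_combination (p x y * q x y * (φ x y * pd1 ψ x y + ψ x y * pd1 φ x y)
      - p x y * pd1 q x y * φ x y * ψ x y) * Complex.I_sq
  · have e3 : pd2 (pd1 (pd2 ψ)) x y
        = (-(Complex.I * pd1 q x y) * pd1 ψ x y + -(Complex.I * q x y) * pd1 (pd1 ψ) x y)
          + (((pd1 W x y + Complex.I * pd1 (pd1 q) x y) / 2) * ψ x y
            + ((W x y + Complex.I * pd1 q x y) / 2) * pd1 ψ x y) := by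
      rw [← pd_comm (contDiff_pd2 hψ) x y, G2ψ]
      exact (((((hasDerivAt_pd1 hq x y).const_mul Complex.I).neg).mul
          (hasDerivAt_pd1 (contDiff_pd1 hψ) x y)).add
        ((((hasDerivAt_pd1 hW x y).add
            ((hasDerivAt_pd1 (contDiff_pd1 hq) x y).const_mul Complex.I)).div_const 2).mul
          (hasDerivAt_pd1 hψ x y))).deriv
    have e4 : pd2 (pd1 (pd2 φ)) x y
        = (Complex.I * pd1 q x y * pd1 φ x y + Complex.I * q x y * pd1 (pd1 φ) x y)
          + (((pd1 W x y - Complex.I * pd1 (pd1 q) x y) / 2) * φ x y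
            + ((W x y - Complex.I * pd1 q x y) / 2) * pd1 φ x y) := by
      rw [← pd_comm (contDiff_pd2 hφ) x y, G2φ]
      exact ((((hasDerivAt_pd1 hq x y).const_mul Complex.I).mul
          (hasDerivAt_pd1 (contDiff_pd1 hφ) x y)).add
        ((((hasDerivAt_pd1 hW x y).sub
            ((hasDerivAt_pd1 (contDiff_pd1 hq) x y).const_mul Complex.I)).div_const 2).mul
          (hasDerivAt_pd1 hφ x y))).deriv
    have hD : pd2 (fun u v => -(φ u v * pd1 (pd2 ψ) u v) + pd1 φ u v * pd2 ψ u v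
        + pd2 φ u v * pd1 ψ u v - ψ u v * pd1 (pd2 φ) u v
        + p u v * q u v * φ u v * ψ u v) x y
        = -(pd2 φ x y * pd1 (pd2 ψ) x y + φ x y * pd2 (pd1 (pd2 ψ)) x y)
          + (pd2 (pd1 φ) x y * pd2 ψ x y + pd1 φ x y * pd2 (pd2 ψ) x y)
          + (pd2 (pd2 φ) x y * pd1 ψ x y + pd2 φ x y * pd2 (pd1 ψ) x y)
          - (pd2 ψ x y * pd1 (pd2 φ) x y + ψ x y * pd2 (pd1 (pd2 φ)) x y)
          + (((pd2 p x y * q x y + p x y * pd2 q x y) * φ x y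
                + p x y * q x y * pd2 φ x y) * ψ x y
              + p x y * q x y * φ x y * pd2 ψ x y) :=
      ((((((hasDerivAt_pd2 hφ x y).mul
            (hasDerivAt_pd2 (contDiff_pd1 (contDiff_pd2 hψ)) x y)).neg).add
          ((hasDerivAt_pd2 (contDiff_pd1 hφ) x y).mul
            (hasDerivAt_pd2 (contDiff_pd2 hψ) x y))).add
        ((hasDerivAt_pd2 (contDiff_pd2 hφ) x y).mul
            (hasDerivAt_pd2 (contDiff_pd1 hψ) x y))).sub
        ((hasDerivAt_pd2 hψ x y).mul
            (hasDerivAt_pd2 (contDiff_pd1 (contDiff_pd2 hφ)) x y))).add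
        ((((hasDerivAt_pd2 hp x y).mul (hasDerivAt_pd2 hq x y)).mul
            (hasDerivAt_pd2 hφ x y)).mul (hasDerivAt_pd2 hψ x y)) |>.deriv
    rw [hD, e3, e4, hφ1 x y, hψ1 x y, hφ2 x y, hψ2 x y, hc2 x y,
      ← pd_comm hφ x y, ← pd_comm hψ x y]
    linear_combination (p x y * q x y * (φ x y * pd2 ψ x y + ψ x y * pd2 φ x y)
      - q x y * pd2 p x y * φ x y * ψ x y) * Complex.I_sq

theorem pd1_ofReal {g : ℝ → ℝ → ℝ}
    (hg : ContDiff ℝ (⊤ : ℕ∞) (fun z : ℝ × ℝ => g z.1 z.2)) (x y : ℝ) :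
    pd1 (fun u v => ((g u v : ℝ) : ℂ)) x y = ((pd1 g x y : ℝ) : ℂ) :=
  ((hasDerivAt_pd1 hg x y).ofReal_comp).deriv

theorem pd2_ofReal {g : ℝ → ℝ → ℝ}
    (hg : ContDiff ℝ (⊤ : ℕ∞) (fun z : ℝ × ℝ => g z.1 z.2)) (x y : ℝ) :
    pd2 (fun u v => ((g u v : ℝ) : ℂ)) x y = ((pd2 g x y : ℝ) : ℂ) :=
  ((hasDerivAt_pd2 hg x y).ofReal_comp).deriv

theorem pd1_conj {g : ℝ → ℝ → ℂ}
    (hg : ContDiff ℝ (⊤ : ℕ∞) (fun z : ℝ × ℝ => g z.1 z.2)) (x y : ℝ) :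
    pd1 (fun u v => conj (g u v)) x y = conj (pd1 g x y) :=
  ((hasDerivAt_pd1 hg x y).star).deriv

theorem pd2_conj {g : ℝ → ℝ → ℂ}
    (hg : ContDiff ℝ (⊤ : ℕ∞) (fun z : ℝ × ℝ => g z.1 z.2)) (x y : ℝ) :
    pd2 (fun u v => conj (g u v)) x y = conj (pd2 g x y) :=
  ((hasDerivAt_pd2 hg x y).star).deriv

/-- the pseudo-Hermitian pairing
`B = −φ ∂₁∂₂(conj χ) + ∂₁φ ∂₂(conj χ) + ∂₂φ ∂₁(conj χ) − (conj χ) ∂₁∂₂φ + pq·φ·(conj χ)`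
of two solutions of the scalar Lie–Wilczynski system is constant. -/
theorem statement_4
    (p q V W : ℝ → ℝ → ℝ) (φ χ : ℝ → ℝ → ℂ)
    (hp : ContDiff ℝ (⊤ : ℕ∞) (fun z : ℝ × ℝ => p z.1 z.2))
    (hq : ContDiff ℝ (⊤ : ℕ∞) (fun z : ℝ × ℝ => q z.1 z.2))
    (hV : ContDiff ℝ (⊤ : ℕ∞) (fun z : ℝ × ℝ => V z.1 z.2))
    (hW : ContDiff ℝ (⊤ : ℕ∞) (fun z : ℝ × ℝ => W z.1 z.2))
    (hφ : ContDiff ℝ (⊤ : ℕ∞) (fun z : ℝ × ℝ => φ z.1 z.2))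
    (hχ : ContDiff ℝ (⊤ : ℕ∞) (fun z : ℝ × ℝ => χ z.1 z.2))
    (hcomp1 : ∀ x y,
      pd2 (pd2 (pd2 p)) x y - 2 * W x y * pd2 p x y - p x y * pd2 W x y
        + pd1 (pd1 (pd1 q)) x y - 2 * V x y * pd1 q x y - q x y * pd1 V x y = 0)
    (hcomp2 : ∀ x y, pd1 W x y = 2 * q x y * pd2 p x y + p x y * pd2 q x y)
    (hcomp3 : ∀ x y, pd2 V x y = 2 * p x y * pd1 q x y + q x y * pd1 p x y)
    (hφ1 : ∀ x y, pd1 (pd1 φ) x y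
        = -(Complex.I * (p x y : ℂ)) * pd2 φ x y
          + (((V x y : ℂ) + Complex.I * ((pd2 p x y : ℝ) : ℂ)) / 2) * φ x y)
    (hφ2 : ∀ x y, pd2 (pd2 φ) x y
        = Complex.I * (q x y : ℂ) * pd1 φ x y
          + (((W x y : ℂ) - Complex.I * ((pd1 q x y : ℝ) : ℂ)) / 2) * φ x y)
    (hχ1 : ∀ x y, pd1 (pd1 χ) x y
        = -(Complex.I * (p x y : ℂ)) * pd2 χ x y
          + (((V x y : ℂ) + Complex.I * ((pd2 p x y : ℝ) : ℂ)) / 2) * χ x y)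
    (hχ2 : ∀ x y, pd2 (pd2 χ) x y
        = Complex.I * (q x y : ℂ) * pd1 χ x y
          + (((W x y : ℂ) - Complex.I * ((pd1 q x y : ℝ) : ℂ)) / 2) * χ x y)
    (B : ℝ → ℝ → ℂ)
    (hB : ∀ x y, B x y
        = -(φ x y * pd1 (pd2 (fun u v => conj (χ u v))) x y)
          + pd1 φ x y * pd2 (fun u v => conj (χ u v)) x y
          + pd2 φ x y * pd1 (fun u v => conj (χ u v)) x y
          - conj (χ x y) * pd1 (pd2 φ) x y
          + (p x y : ℂ) * (q x y : ℂ) * φ x y * conj (χ x y)) :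
    ∀ x y, pd1 B x y = 0 ∧ pd2 B x y = 0 := by
  have hpC : ContDiff ℝ (⊤ : ℕ∞) (fun z : ℝ × ℝ => ((p z.1 z.2 : ℝ) : ℂ)) :=
    Complex.ofRealCLM.contDiff.comp hp
  have hqC : ContDiff ℝ (⊤ : ℕ∞) (fun z : ℝ × ℝ => ((q z.1 z.2 : ℝ) : ℂ)) :=
    Complex.ofRealCLM.contDiff.comp hq
  have hVC : ContDiff ℝ (⊤ : ℕ∞) (fun z : ℝ × ℝ => ((V z.1 z.2 : ℝ) : ℂ)) :=
    Complex.ofRealCLM.contDiff.comp hV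
  have hWC : ContDiff ℝ (⊤ : ℕ∞) (fun z : ℝ × ℝ => ((W z.1 z.2 : ℝ) : ℂ)) :=
    Complex.ofRealCLM.contDiff.comp hW
  have hψC : ContDiff ℝ (⊤ : ℕ∞) (fun z : ℝ × ℝ => conj (χ z.1 z.2)) :=
    Complex.conjCLE.contDiff.comp hχ
  have hc2' : ∀ u v, pd1 (fun a b => ((W a b : ℝ) : ℂ)) u v
      = 2 * ((q u v : ℝ) : ℂ) * pd2 (fun a b => ((p a b : ℝ) : ℂ)) u v
        + ((p u v : ℝ) : ℂ) * pd2 (fun a b => ((q a b : ℝ) : ℂ)) u v := by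
    intro u v
    rw [pd1_ofReal hW u v, pd2_ofReal hp u v, pd2_ofReal hq u v, hcomp2 u v]
    push_cast; ring
  have hc3' : ∀ u v, pd2 (fun a b => ((V a b : ℝ) : ℂ)) u v
      = 2 * ((p u v : ℝ) : ℂ) * pd1 (fun a b => ((q a b : ℝ) : ℂ)) u v
        + ((q u v : ℝ) : ℂ) * pd1 (fun a b => ((p a b : ℝ) : ℂ)) u v := by
    intro u v
    rw [pd2_ofReal hV u v, pd1_ofReal hq u v, pd1_ofReal hp u v, hcomp3 u v]
    push_cast; ring
  have hφ1' : ∀ u v, pd1 (pd1 φ) u v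
      = -(Complex.I * ((p u v : ℝ) : ℂ)) * pd2 φ u v
        + ((((V u v : ℝ) : ℂ) + Complex.I * pd2 (fun a b => ((p a b : ℝ) : ℂ)) u v) / 2)
          * φ u v := by
    intro u v; rw [pd2_ofReal hp u v]; exact hφ1 u v
  have hφ2' : ∀ u v, pd2 (pd2 φ) u v
      = Complex.I * ((q u v : ℝ) : ℂ) * pd1 φ u v
        + ((((W u v : ℝ) : ℂ) - Complex.I * pd1 (fun a b => ((q a b : ℝ) : ℂ)) u v) / 2)
          * φ u v := by
    intro u v; rw [pd1_ofReal hq u v]; exact hφ2 u v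
  have hconj1 : pd1 (fun a b => conj (χ a b)) = fun a b => conj (pd1 χ a b) :=
    funext fun a => funext fun b => pd1_conj hχ a b
  have hconj2 : pd2 (fun a b => conj (χ a b)) = fun a b => conj (pd2 χ a b) :=
    funext fun a => funext fun b => pd2_conj hχ a b
  have hψ1' : ∀ u v, pd1 (pd1 (fun a b => conj (χ a b))) u v
      = Complex.I * ((p u v : ℝ) : ℂ) * pd2 (fun a b => conj (χ a b)) u v
        + ((((V u v : ℝ) : ℂ) - Complex.I * pd2 (fun a b => ((p a b : ℝ) : ℂ)) u v) / 2)
          * conj (χ u v) := by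
    intro u v
    rw [hconj1, pd1_conj (contDiff_pd1 hχ) u v, hχ1 u v, hconj2, pd2_ofReal hp u v]
    simp only [map_add, map_sub, map_mul, map_neg, map_div₀, Complex.conj_I, Complex.conj_ofReal,
      map_ofNat]
    ring
  have hψ2' : ∀ u v, pd2 (pd2 (fun a b => conj (χ a b))) u v
      = -(Complex.I * ((q u v : ℝ) : ℂ)) * pd1 (fun a b => conj (χ a b)) u v
        + ((((W u v : ℝ) : ℂ) + Complex.I * pd1 (fun a b => ((q a b : ℝ) : ℂ)) u v) / 2)
          * conj (χ u v) := by
    intro u v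
    rw [hconj2, pd2_conj (contDiff_pd2 hχ) u v, hχ2 u v, hconj1, pd1_ofReal hq u v]
    simp only [map_add, map_sub, map_mul, map_neg, map_div₀, Complex.conj_I, Complex.conj_ofReal,
      map_ofNat]
    ring
  intro x y
  have main := LW_aux (fun a b => ((p a b : ℝ) : ℂ)) (fun a b => ((q a b : ℝ) : ℂ))
    (fun a b => ((V a b : ℝ) : ℂ)) (fun a b => ((W a b : ℝ) : ℂ)) φ
    (fun a b => conj (χ a b)) hpC hqC hVC hWC hφ hψC hc2' hc3' hφ1' hφ2' hψ1' hψ2' x y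
  constructor
  · refine Eq.trans ?_ main.1
    exact congrArg (fun f : ℝ → ℂ => deriv f x) (funext fun t => hB t y)
  · refine Eq.trans ?_ main.2
    exact congrArg (fun f : ℝ → ℂ => deriv f y) (funext fun t => hB x t)
end
end

section
/- For all a, b, A, B ∈ ℂ⁴ the pseudo-Hermitian scalar product of wedge products, defined by (a∧b, A∧B) := (1/2)(⟨a,B⟩·⟨b,A⟩ − ⟨a,A⟩·⟨b,B⟩), is given in the explicit ℂ⁶ coordinates by (a∧b, A∧B) = −y₀·conj(Y₀) + y₁·conj(Y₁) + y₂·conj(Y₂) + y₃·conj(Y₃) + y₄·conj(Y₄) − y₅·conj(Y₅), where (y₀,…,y₅) are the components of a∧b and (Y₀,…,Y₅) are the components of A∧B. -/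
open Complex ComplexConjugate

noncomputable section

/-- the pseudo-Hermitian scalar product of wedge products,
`(a∧b, A∧B) = (1/2)(⟨a,B⟩⟨b,A⟩ − ⟨a,A⟩⟨b,B⟩)`, equals the signature-(4,2)
pseudo-Hermitian form of the explicit ℂ⁶ coordinates. -/
theorem statement_7 (a b A B : Fin 4 → ℂ) :
    (herm4 a B * herm4 b A - herm4 a A * herm4 b B) / 2
      = herm6 (wedgeC a b) (wedgeC A B) := by
  have w0 : ∀ u v : Fin 4 → ℂ, wedgeC u v 0 = ((u 0 * v 2 - u 2 * v 0) - (u 3 * v 1 - u 1 * v 3)) / 2 := fun _ _ => rfl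
  have w1 : ∀ u v : Fin 4 → ℂ, wedgeC u v 1 = ((u 0 * v 2 - u 2 * v 0) + (u 3 * v 1 - u 1 * v 3)) / 2 := fun _ _ => rfl
  have w2 : ∀ u v : Fin 4 → ℂ, wedgeC u v 2 = ((u 0 * v 3 - u 3 * v 0) + (u 1 * v 2 - u 2 * v 1)) / 2 := fun _ _ => rfl
  have w3 : ∀ u v : Fin 4 → ℂ, wedgeC u v 3 = ((u 0 * v 3 - u 3 * v 0) - (u 1 * v 2 - u 2 * v 1)) / (2 * Complex.I) := fun _ _ => rfl
  have w4 : ∀ u v : Fin 4 → ℂ, wedgeC u v 4 = ((u 0 * v 1 - u 1 * v 0) - (u 2 * v 3 - u 3 * v 2)) / (2 * Complex.I) := fun _ _ => rfl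
  have w5 : ∀ u v : Fin 4 → ℂ, wedgeC u v 5 = ((u 0 * v 1 - u 1 * v 0) + (u 2 * v 3 - u 3 * v 2)) / (2 * Complex.I) := fun _ _ => rfl
  simp only [herm4, herm6, w0, w1, w2, w3, w4, w5, map_div₀, map_add, map_sub, map_mul,
    map_ofNat, Complex.conj_I]
  simp only [div_mul_div_comm]
  have h4 : (2:ℂ) * Complex.I * (2 * -Complex.I) = 4 := by
    ring_nf
    rw [Complex.I_sq]
    ring
  rw [h4]
  norm_num
  rw [div_eq_iff (two_ne_zero)]
  ring_nf
end
end

section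
/- Let α, ρ₁, ρ₂, s₁, s₂, ε₀, ε₁, ε₂ ∈ ℝ and let ψ₁, ψ₂ : ℝ → ℝ be smooth solutions of the ODEs ψ₁″ = α·ψ₁² + ρ₁·ψ₁ + s₁ and ψ₂″ = α·ψ₂² + ρ₂·ψ₂ + s₂. Define functions on ℝ² (coordinates R¹ = x, R² = y) by p(x,y) = ψ₁′(x), q(x,y) = −ψ₂′(y), V(x,y) = ε₁ + ε₀·ψ₁(x) − ψ₂(y)·ψ₁″(x) − (1/2)ρ₂·ψ₁(x)², W(x,y) = ε₂ + ε₀·ψ₂(y) − ψ₁(x)·ψ₂″(y) − (1/2)ρ₁·ψ₂(y)². Then p, q, V, W satisfy the compatibility conditions: ∂₂³p − 2W ∂₂p − p ∂₂W + ∂₁³q − 2V ∂₁q − q ∂₁V = 0, ∂₁W = 2q ∂₂p + p ∂₂q, and ∂₂V = 2p ∂₁q + q ∂₁p. -/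
open Complex ComplexConjugate

noncomputable section

/-- the elliptic-function potentials of the case `c = 0` of
Lie-applicable surfaces satisfy the compatibility (`Gauss-Codazzi') conditions. -/
theorem statement_12 (α ρ₁ ρ₂ s₁ s₂ ε₀ ε₁ ε₂ : ℝ) (ψ₁ ψ₂ : ℝ → ℝ)
    (hψ₁ : ContDiff ℝ (⊤ : ℕ∞) ψ₁) (hψ₂ : ContDiff ℝ (⊤ : ℕ∞) ψ₂)
    (hode₁ : ∀ t, deriv (deriv ψ₁) t = α * (ψ₁ t) ^ 2 + ρ₁ * ψ₁ t + s₁)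
    (hode₂ : ∀ t, deriv (deriv ψ₂) t = α * (ψ₂ t) ^ 2 + ρ₂ * ψ₂ t + s₂)
    (p q V W : ℝ → ℝ → ℝ)
    (hp : ∀ x y, p x y = deriv ψ₁ x)
    (hq : ∀ x y, q x y = -deriv ψ₂ y)
    (hV : ∀ x y, V x y
        = ε₁ + ε₀ * ψ₁ x - ψ₂ y * deriv (deriv ψ₁) x - ρ₂ * (ψ₁ x) ^ 2 / 2)
    (hW : ∀ x y, W x y
        = ε₂ + ε₀ * ψ₂ y - ψ₁ x * deriv (deriv ψ₂) y - ρ₁ * (ψ₂ y) ^ 2 / 2) :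
    (∀ x y,
      pd2 (pd2 (pd2 p)) x y - 2 * W x y * pd2 p x y - p x y * pd2 W x y
        + pd1 (pd1 (pd1 q)) x y - 2 * V x y * pd1 q x y - q x y * pd1 V x y = 0) ∧
    (∀ x y, pd1 W x y = 2 * q x y * pd2 p x y + p x y * pd2 q x y) ∧
    (∀ x y, pd2 V x y = 2 * p x y * pd1 q x y + q x y * pd1 p x y) := by

  have hψ₁i : ContDiff ℝ ((⊤:ℕ∞):WithTop ℕ∞) ψ₁ := hψ₁.of_le (by simp)
  have hψ₂i : ContDiff ℝ ((⊤:ℕ∞):WithTop ℕ∞) ψ₂ := hψ₂.of_le (by simp)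
  have H1 := contDiff_infty_iff_deriv.mp hψ₁i
  have H2 := contDiff_infty_iff_deriv.mp hψ₂i
  have H1' := contDiff_infty_iff_deriv.mp H1.2
  have H2' := contDiff_infty_iff_deriv.mp H2.2
  have hψ₁d : Differentiable ℝ ψ₁ := H1.1
  have hψ₂d : Differentiable ℝ ψ₂ := H2.1
  have hψ₁'d : Differentiable ℝ (deriv ψ₁) := H1'.1
  have hψ₂'d : Differentiable ℝ (deriv ψ₂) := H2'.1
  -- pd2 p = 0
  have hp2 : ∀ x y, pd2 p x y = 0 := by
    intro x y; unfold pd2; simp only [hp]; exact deriv_const _ _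
  have hp22 : ∀ x y, pd2 (pd2 p) x y = 0 := by
    intro x y
    show deriv (fun t => pd2 p x t) y = 0
    rw [show (fun t => pd2 p x t) = fun _ => (0:ℝ) from funext fun t => hp2 x t]
    exact deriv_const _ _
  have hp222 : ∀ x y, pd2 (pd2 (pd2 p)) x y = 0 := by
    intro x y
    show deriv (fun t => pd2 (pd2 p) x t) y = 0
    rw [show (fun t => pd2 (pd2 p) x t) = fun _ => (0:ℝ) from funext fun t => hp22 x t]
    exact deriv_const _ _
  -- pd1 q = 0
  have hq1 : ∀ x y, pd1 q x y = 0 := by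
    intro x y; unfold pd1; simp only [hq]; exact deriv_const _ _
  have hq11 : ∀ x y, pd1 (pd1 q) x y = 0 := by
    intro x y
    show deriv (fun t => pd1 q t y) x = 0
    rw [show (fun t => pd1 q t y) = fun _ => (0:ℝ) from funext fun t => hq1 t y]
    exact deriv_const _ _
  have hq111 : ∀ x y, pd1 (pd1 (pd1 q)) x y = 0 := by
    intro x y
    show deriv (fun t => pd1 (pd1 q) t y) x = 0
    rw [show (fun t => pd1 (pd1 q) t y) = fun _ => (0:ℝ) from funext fun t => hq11 t y]
    exact deriv_const _ _
  -- pd1 p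
  have hp1 : ∀ x y, pd1 p x y = deriv (deriv ψ₁) x := by
    intro x y; unfold pd1; simp only [hp]
  -- pd2 q
  have hq2 : ∀ x y, pd2 q x y = -(deriv (deriv ψ₂) y) := by
    intro x y; unfold pd2; simp only [hq]
    have := ((hψ₂'d y).hasDerivAt).neg
    exact this.deriv
  -- pd2 V
  have hV2 : ∀ x y, pd2 V x y = -(deriv ψ₂ y * deriv (deriv ψ₁) x) := by
    intro x y; unfold pd2
    have h2 : HasDerivAt ψ₂ (deriv ψ₂ y) y := (hψ₂d y).hasDerivAt
    have hc : HasDerivAt (fun t => ε₁ + ε₀ * ψ₁ x - ψ₂ t * deriv (deriv ψ₁) x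
        - ρ₂ * ψ₁ x ^ 2 / 2) (-(deriv ψ₂ y * deriv (deriv ψ₁) x)) y := by
      simpa using (((h2.mul_const (deriv (deriv ψ₁) x)).const_sub
        (ε₁ + ε₀ * ψ₁ x)).sub_const (ρ₂ * ψ₁ x ^ 2 / 2))
    have heq : (fun t => V x t) = (fun t => ε₁ + ε₀ * ψ₁ x
        - ψ₂ t * deriv (deriv ψ₁) x - ρ₂ * ψ₁ x ^ 2 / 2) := by
      funext t; rw [hV]
    rw [heq]; exact hc.deriv
  -- pd1 W
  have hW1 : ∀ x y, pd1 W x y = -(deriv ψ₁ x * deriv (deriv ψ₂) y) := by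
    intro x y; unfold pd1
    have h1 : HasDerivAt ψ₁ (deriv ψ₁ x) x := (hψ₁d x).hasDerivAt
    have hc : HasDerivAt (fun t => ε₂ + ε₀ * ψ₂ y - ψ₁ t * deriv (deriv ψ₂) y
        - ρ₁ * ψ₂ y ^ 2 / 2) (-(deriv ψ₁ x * deriv (deriv ψ₂) y)) x := by
      simpa using (((h1.mul_const (deriv (deriv ψ₂) y)).const_sub
        (ε₂ + ε₀ * ψ₂ y)).sub_const (ρ₁ * ψ₂ y ^ 2 / 2))
    have heq : (fun t => W t y) = (fun t => ε₂ + ε₀ * ψ₂ y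
        - ψ₁ t * deriv (deriv ψ₂) y - ρ₁ * ψ₂ y ^ 2 / 2) := by
      funext t; rw [hW]
    rw [heq]; exact hc.deriv
  -- pd1 V
  have hV1 : ∀ x y, pd1 V x y
      = ε₀ * deriv ψ₁ x - ψ₂ y * (α * (2 * ψ₁ x * deriv ψ₁ x) + ρ₁ * deriv ψ₁ x)
        - ρ₂ * (2 * ψ₁ x * deriv ψ₁ x) / 2 := by
    intro x y; unfold pd1
    have h1 : HasDerivAt ψ₁ (deriv ψ₁ x) x := (hψ₁d x).hasDerivAt
    have hsq : HasDerivAt (fun t => ψ₁ t ^ 2) (2 * ψ₁ x * deriv ψ₁ x) x := by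
      exact (h1.pow 2).congr_deriv (by simp [mul_assoc])
    have hc : HasDerivAt (fun t => ε₁ + ε₀ * ψ₁ t
        - ψ₂ y * (α * ψ₁ t ^ 2 + ρ₁ * ψ₁ t + s₁) - ρ₂ * ψ₁ t ^ 2 / 2)
        (ε₀ * deriv ψ₁ x - ψ₂ y * (α * (2 * ψ₁ x * deriv ψ₁ x) + ρ₁ * deriv ψ₁ x)
          - ρ₂ * (2 * ψ₁ x * deriv ψ₁ x) / 2) x := by
      have ha := ((h1.const_mul ε₀).const_add ε₁).sub
        ((((hsq.const_mul α).add (h1.const_mul ρ₁)).add_const s₁).const_mul (ψ₂ y))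
      have hb := ha.sub ((hsq.const_mul ρ₂).div_const 2)
      convert hb using 1
      all_goals rfl
    have heq : (fun t => V t y) = (fun t => ε₁ + ε₀ * ψ₁ t
        - ψ₂ y * (α * ψ₁ t ^ 2 + ρ₁ * ψ₁ t + s₁) - ρ₂ * ψ₁ t ^ 2 / 2) := by
      funext t; rw [hV, hode₁]
    rw [heq]; exact hc.deriv
  -- pd2 W
  have hW2 : ∀ x y, pd2 W x y
      = ε₀ * deriv ψ₂ y - ψ₁ x * (α * (2 * ψ₂ y * deriv ψ₂ y) + ρ₂ * deriv ψ₂ y)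
        - ρ₁ * (2 * ψ₂ y * deriv ψ₂ y) / 2 := by
    intro x y; unfold pd2
    have h2 : HasDerivAt ψ₂ (deriv ψ₂ y) y := (hψ₂d y).hasDerivAt
    have hsq : HasDerivAt (fun t => ψ₂ t ^ 2) (2 * ψ₂ y * deriv ψ₂ y) y := by
      exact (h2.pow 2).congr_deriv (by simp [mul_assoc])
    have hc : HasDerivAt (fun t => ε₂ + ε₀ * ψ₂ t
        - ψ₁ x * (α * ψ₂ t ^ 2 + ρ₂ * ψ₂ t + s₂) - ρ₁ * ψ₂ t ^ 2 / 2)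
        (ε₀ * deriv ψ₂ y - ψ₁ x * (α * (2 * ψ₂ y * deriv ψ₂ y) + ρ₂ * deriv ψ₂ y)
          - ρ₁ * (2 * ψ₂ y * deriv ψ₂ y) / 2) y := by
      have ha := ((h2.const_mul ε₀).const_add ε₂).sub
        ((((hsq.const_mul α).add (h2.const_mul ρ₂)).add_const s₂).const_mul (ψ₁ x))
      have hb := ha.sub ((hsq.const_mul ρ₁).div_const 2)
      convert hb using 1
      all_goals rfl
    have heq : (fun t => W x t) = (fun t => ε₂ + ε₀ * ψ₂ t
        - ψ₁ x * (α * ψ₂ t ^ 2 + ρ₂ * ψ₂ t + s₂) - ρ₁ * ψ₂ t ^ 2 / 2) := by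
      funext t; rw [hW, hode₂]
    rw [heq]; exact hc.deriv
  refine ⟨?_, ?_, ?_⟩
  · intro x y
    rw [hp222, hp2, hq111, hq1, hW2, hV1, hp, hq]
    ring
  · intro x y
    rw [hW1, hq2, hp2, hp, hq]
    ring
  · intro x y
    rw [hV2, hp1, hq1, hp, hq]
    ring
end
end
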